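/- arXiv:2108.05253 — 2 statements merged into one kernel-verified Lean document; each statement's English description precedes it below -/
import Mathlib

section
/- Let U be an n×n unitary complex matrix and C an invertible n×n complex matrix, and set A = C·(U − I) and B = i·C·(U + I). Then A·B† = B·A† (where † denotes the conjugate transpose), and A + iB = −2C is invertible; in particular the n×2n block matrix (A, B) has maximal rank n. -/
open Matrix

/-! Since `U Uᴴ = 1`, `(U - 1)(Uᴴ + 1) = U - Uᴴ = -(U + 1)(Uᴴ - 1)`; conjugating by `C` gives
`A Bᴴ = B Aᴴ`. Multiplying `(A, B)` on the right by the column `(1, i)` gives `A + iB = -2C`,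
which is invertible, so `(A, B)` has full row rank. -/

theorem sub_one_mul_add_one_of_mul_eq_one {R : Type*} [Ring R] {u v : R} (h : u * v = 1) :
    (u - 1) * (v + 1) = u - v := by
  simp only [sub_mul, mul_add, h, one_mul, mul_one]; abel

theorem add_one_mul_sub_one_of_mul_eq_one {R : Type*} [Ring R] {u v : R} (h : u * v = 1) :
    (u + 1) * (v - 1) = v - u := by
  simp only [add_mul, mul_sub, h, one_mul, mul_one]; abel

theorem mul_sub_one_mul_star_I_smul_eq {R : Type*} [Ring R] [StarRing R] [Module ℂ R]
    [StarModule ℂ R] [IsScalarTower ℂ R R] [SMulCommClass ℂ R R] {u : R} (hu : u * star u = 1)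
    (c : R) :
    c * (u - 1) * star (Complex.I • (c * (u + 1))) =
      Complex.I • (c * (u + 1)) * star (c * (u - 1)) := by
  simp only [star_smul, star_mul, star_sub, star_add, star_one, Complex.star_def, Complex.conj_I,
    smul_mul_assoc, mul_smul_comm, mul_assoc, ← mul_assoc (u - 1), ← mul_assoc (u + 1),
    sub_one_mul_add_one_of_mul_eq_one hu, add_one_mul_sub_one_of_mul_eq_one hu]
  rw [← neg_sub u, neg_mul, mul_neg, smul_neg, neg_smul]

theorem mul_sub_one_add_I_smul_I_smul {R : Type*} [Ring R] [Module ℂ R] (u c : R) :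
    c * (u - 1) + Complex.I • Complex.I • (c * (u + 1)) = (-2 : ℂ) • c := by
  rw [smul_smul, Complex.I_mul_I, mul_sub, mul_add, mul_one]
  module

theorem Matrix.rank_fromCols_of_isUnit_mul_add_mul {m n₁ n₂ K : Type*} [Fintype m]
    [DecidableEq m] [Fintype n₁] [Fintype n₂] [Field K]
    (A : Matrix m n₁ K) (B : Matrix m n₂ K) (X : Matrix n₁ m K) (Y : Matrix n₂ m K)
    (h : IsUnit (A * X + B * Y)) : (fromCols A B).rank = Fintype.card m := by
  refine le_antisymm (rank_le_card_height _) ?_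
  calc Fintype.card m = (A * X + B * Y).rank := (rank_of_isUnit _ h).symm
    _ = (fromCols A B * fromRows X Y).rank := by rw [fromCols_mul_fromRows]
    _ ≤ (fromCols A B).rank := rank_mul_le_left _ _

theorem coupling_matrices_selfadjoint_general (n : ℕ) (U C : Matrix (Fin n) (Fin n) ℂ)
    (hU1 : U * Uᴴ = 1) (hC : IsUnit C)
    (A B : Matrix (Fin n) (Fin n) ℂ)
    (hA : A = C * (U - 1)) (hB : B = Complex.I • (C * (U + 1))) :
    A * Bᴴ = B * Aᴴ ∧
    A + Complex.I • B = (-2 : ℂ) • C ∧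
    IsUnit (A + Complex.I • B) ∧
    (Matrix.fromCols A B).rank = n := by
  subst hA hB
  have hsum := mul_sub_one_add_I_smul_I_smul U C
  have hunit : IsUnit (C * (U - 1) + Complex.I • Complex.I • (C * (U + 1))) := by
    rw [hsum]
    exact hC.smul (Units.mk0 (-2 : ℂ) (by norm_num))
  refine ⟨mul_sub_one_mul_star_I_smul_eq hU1 C, hsum, hunit, ?_⟩
  have hrank := rank_fromCols_of_isUnit_mul_add_mul (C * (U - 1)) (Complex.I • (C * (U + 1)))
    1 (Complex.I • 1) (by rwa [Matrix.mul_one, Matrix.mul_smul, Matrix.mul_one])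
  rwa [Fintype.card_fin] at hrank

/-- For a unitary `n×n` matrix `U` and an invertible `n×n` matrix `C`, the matrices
`A = C(U − I)` and `B = iC(U + I)` satisfy `A·B† = B·A†`, and `A + iB = −2C` is
invertible; in particular the `n×2n` block matrix `(A, B)` has maximal rank `n`. -/
theorem coupling_matrices_selfadjoint (n : ℕ) (U C : Matrix (Fin n) (Fin n) ℂ)
    (hU1 : U * Uᴴ = 1) (hU2 : Uᴴ * U = 1) (hC : IsUnit C)
    (A B : Matrix (Fin n) (Fin n) ℂ)
    (hA : A = C * (U - 1)) (hB : B = Complex.I • (C * (U + 1))) :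
    A * Bᴴ = B * Aᴴ ∧
    A + Complex.I • B = (-2 : ℂ) • C ∧
    IsUnit (A + Complex.I • B) ∧
    (Matrix.fromCols A B).rank = n :=
  coupling_matrices_selfadjoint_general n U C hU1 hC A B hA hB
end

section
/- Fix ℓ > 0 and E ∈ ℝ. There exist functions f₁, f₂, f₃ : [0, ℓ] → ℂ, each twice continuously differentiable with f_j'' = −E·f_j on [0, ℓ], not all identically zero, satisfying f₁'(0) = f₂'(0) = f₃'(0) = 0 together with the preferred-orientation coupling at the central vertex: −f₁(ℓ) + f₂(ℓ) − i(f₁'(ℓ) + f₂'(ℓ)) = 0, −f₂(ℓ) + f₃(ℓ) − i(f₂'(ℓ) + f₃'(ℓ)) = 0, and f₁(ℓ) − f₃(ℓ) − i(f₁'(ℓ) + f₃'(ℓ)) = 0, if and only if there exists a not-identically-zero twice continuously differentiable g : [0, ℓ] → ℂ with g'' = −E·g, g'(0) = 0, and at least one of: g'(ℓ) = 0, or −g'(ℓ) = √3·g(ℓ), or −g'(ℓ) = −√3·g(ℓ). -/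
/-! The coupling commutes with the cyclic shift `U` of the edges, so it decouples along the
eigenvectors of `U`. For a cube root of unity `μ`, the weights `(1, μ², μ)` form a left
eigenvector of `U`; hence `g = f₁ + μ² f₂ + μ f₃` solves the same equation, is Neumann at `0`
and satisfies `(μ - 1) g(ℓ) = i (μ + 1) g'(ℓ)` at the centre. Conversely `(g, μ g, μ² g)` is an
eigenfunction of the star whenever `g` satisfies that condition, and by Fourier inversion over the
three cube roots some `g` is nonzero if some `fⱼ` is. For `μ = 1, ω, ω²` the condition is
`g'(ℓ) = 0`, `g'(ℓ) = √3 g(ℓ)` and `g'(ℓ) = -√3 g(ℓ)` respectively. -/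

open Set

/-- `IsSol ℓ E f f'` says that `f : [0,ℓ] → ℂ` is twice continuously differentiable
with first derivative `f'` and second derivative `f'' = −E·f` on `[0, ℓ]`. -/
def IsSol (ℓ E : ℝ) (f f' : ℝ → ℂ) : Prop :=
  (∀ x ∈ Icc (0 : ℝ) ℓ, HasDerivWithinAt f (f' x) (Icc (0 : ℝ) ℓ) x) ∧
  (∀ x ∈ Icc (0 : ℝ) ℓ, HasDerivWithinAt f' (-(E : ℂ) * f x) (Icc (0 : ℝ) ℓ) x)

open Complex

namespace IsSol

variable {ℓ E : ℝ} {f f' g g' : ℝ → ℂ}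

theorem add (hf : IsSol ℓ E f f') (hg : IsSol ℓ E g g') :
    IsSol ℓ E (fun x => f x + g x) (fun x => f' x + g' x) :=
  ⟨fun x hx => (hf.1 x hx).add (hg.1 x hx),
    fun x hx => ((hf.2 x hx).add (hg.2 x hx)).congr_deriv (by ring)⟩

theorem const_mul (c : ℂ) (hf : IsSol ℓ E f f') :
    IsSol ℓ E (fun x => c * f x) (fun x => c * f' x) :=
  ⟨fun x hx => (hf.1 x hx).const_mul c,
    fun x hx => ((hf.2 x hx).const_mul c).congr_deriv (by ring)⟩

end IsSol

theorem ofReal_sqrt_three_sq : ((√3 : ℝ) : ℂ) ^ 2 = 3 := by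
  rw [← ofReal_pow, Real.sq_sqrt (by norm_num)]
  norm_num

noncomputable def ω : ℂ := (-1 + √3 * I) / 2

theorem ω_sq_add_ω_add_one : ω ^ 2 + ω + 1 = 0 := by
  unfold ω
  linear_combination (I ^ 2 / 4) * ofReal_sqrt_three_sq + (3 / 4 : ℂ) * I_sq

theorem ω_pow_three : ω ^ 3 = 1 := by
  linear_combination (ω - 1) * ω_sq_add_ω_add_one

theorem ω_sq_pow_three : (ω ^ 2) ^ 3 = 1 := by
  rw [← pow_mul, pow_mul', ω_pow_three, one_pow]

theorem ω_ne_zero : ω ≠ 0 := by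
  intro h
  simpa [h] using ω_pow_three

theorem ω_add_one_ne_zero : ω + 1 ≠ 0 := by
  rw [show ω + 1 = -ω ^ 2 by linear_combination ω_sq_add_ω_add_one]
  exact neg_ne_zero.2 (pow_ne_zero 2 ω_ne_zero)

theorem ω_sq_add_one_ne_zero : ω ^ 2 + 1 ≠ 0 := by
  rw [show ω ^ 2 + 1 = -ω by linear_combination ω_sq_add_ω_add_one]
  exact neg_ne_zero.2 ω_ne_zero

theorem ω_sub_one : ω - 1 = √3 * (I * (ω + 1)) := by
  unfold ω
  grind [I_sq, ofReal_sqrt_three_sq]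

theorem ω_sq_sub_one : ω ^ 2 - 1 = -√3 * (I * (ω ^ 2 + 1)) := by
  unfold ω
  grind [I_sq, ofReal_sqrt_three_sq]

theorem eq_one_or_eq_ω_or_eq_ω_sq_of_pow_three_eq_one {μ : ℂ} (hμ : μ ^ 3 = 1) :
    μ = 1 ∨ μ = ω ∨ μ = ω ^ 2 := by
  have h : (μ - 1) * ((μ - ω) * (μ - ω ^ 2)) = 0 := by
    linear_combination hμ + (μ - 1) * (ω - 1 - μ) * ω_sq_add_ω_add_one
  simpa only [mul_eq_zero, sub_eq_zero] using h

theorem exists_pow_three_eq_one_dft_ne_zero {a₁ a₂ a₃ : ℂ} (h : a₁ ≠ 0 ∨ a₂ ≠ 0 ∨ a₃ ≠ 0) :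
    ∃ μ : ℂ, μ ^ 3 = 1 ∧ a₁ + μ ^ 2 * a₂ + μ * a₃ ≠ 0 := by
  by_contra! h0
  have h₁ := h0 1 (one_pow 3)
  have h_ω := h0 ω ω_pow_three
  have h_ω₂ := h0 (ω ^ 2) ω_sq_pow_three
  have hω := ω_sq_add_ω_add_one
  rcases h with h | h | h <;> apply h <;> grind

/-- The rows of `(U - I) Ψ + i (U + I) Ψ' = 0` with `Ψ = a` and `Ψ' = -b`, where `bⱼ = fⱼ'(ℓ)`. -/
def PreferredOrientationCoupling (a₁ a₂ a₃ b₁ b₂ b₃ : ℂ) : Prop :=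
  -a₁ + a₂ - I * (b₁ + b₂) = 0 ∧ -a₂ + a₃ - I * (b₂ + b₃) = 0 ∧ a₁ - a₃ - I * (b₁ + b₃) = 0

/-- The coupling restricted to the eigenspace of `U` for the eigenvalue `μ`. -/
def SegmentCondition (μ a b : ℂ) : Prop :=
  (μ - 1) * a = I * (μ + 1) * b

theorem PreferredOrientationCoupling.segmentCondition_dft {a₁ a₂ a₃ b₁ b₂ b₃ μ : ℂ}
    (hμ : μ ^ 3 = 1) (h : PreferredOrientationCoupling a₁ a₂ a₃ b₁ b₂ b₃) :
    SegmentCondition μ (a₁ + μ ^ 2 * a₂ + μ * a₃) (b₁ + μ ^ 2 * b₂ + μ * b₃) := by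
  obtain ⟨h₁, h₂, h₃⟩ := h
  unfold SegmentCondition
  linear_combination h₁ + μ ^ 2 * h₂ + μ * h₃ + (a₂ - I * b₂) * hμ

theorem preferredOrientationCoupling_of_segmentCondition {μ a b : ℂ} (hμ : μ ^ 3 = 1)
    (h : SegmentCondition μ a b) :
    PreferredOrientationCoupling a (μ * a) (μ ^ 2 * a) b (μ * b) (μ ^ 2 * b) := by
  unfold SegmentCondition at h
  exact ⟨by linear_combination h, by linear_combination μ * h,
    by linear_combination μ ^ 2 * h - (a - I * b) * hμ⟩

theorem segmentCondition_iff {μ k a b : ℂ} (hμ : μ + 1 ≠ 0) (hk : μ - 1 = k * (I * (μ + 1))) :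
    SegmentCondition μ a b ↔ b = k * a := by
  unfold SegmentCondition
  constructor
  · intro h
    exact mul_left_cancel₀ (mul_ne_zero I_ne_zero hμ) (by linear_combination -h + a * hk)
  · intro h
    linear_combination a * hk - I * (μ + 1) * h

theorem exists_segmentCondition_iff (a b : ℂ) :
    (∃ μ : ℂ, μ ^ 3 = 1 ∧ SegmentCondition μ a b) ↔ b = 0 ∨ -b = √3 * a ∨ -b = -√3 * a := by
  have h_one : SegmentCondition 1 a b ↔ b = 0 * a := segmentCondition_iff (by norm_num) (by ring)
  have h_ω : SegmentCondition ω a b ↔ b = √3 * a := segmentCondition_iff ω_add_one_ne_zero ω_sub_one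
  have h_ω₂ : SegmentCondition (ω ^ 2) a b ↔ b = -√3 * a :=
    segmentCondition_iff ω_sq_add_one_ne_zero ω_sq_sub_one
  rw [zero_mul] at h_one
  constructor
  · rintro ⟨μ, hμ, h⟩
    rcases eq_one_or_eq_ω_or_eq_ω_sq_of_pow_three_eq_one hμ with rfl | rfl | rfl
    · exact Or.inl (h_one.1 h)
    · exact Or.inr (Or.inr (by rw [h_ω.1 h]; ring))
    · exact Or.inr (Or.inl (by rw [h_ω₂.1 h]; ring))
  · rintro (h | h | h)
    · exact ⟨1, one_pow 3, h_one.2 h⟩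
    · exact ⟨ω ^ 2, ω_sq_pow_three, h_ω₂.2 (by linear_combination -h)⟩
    · exact ⟨ω, ω_pow_three, h_ω.2 (by linear_combination -h)⟩

theorem star_preferred_orientation_spectrum_general (ℓ E : ℝ) :
    (∃ f₁ f₁' f₂ f₂' f₃ f₃' : ℝ → ℂ,
      IsSol ℓ E f₁ f₁' ∧ IsSol ℓ E f₂ f₂' ∧ IsSol ℓ E f₃ f₃' ∧
      (∃ x ∈ Icc (0 : ℝ) ℓ, f₁ x ≠ 0 ∨ f₂ x ≠ 0 ∨ f₃ x ≠ 0) ∧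
      f₁' 0 = 0 ∧ f₂' 0 = 0 ∧ f₃' 0 = 0 ∧
      -f₁ ℓ + f₂ ℓ - Complex.I * (f₁' ℓ + f₂' ℓ) = 0 ∧
      -f₂ ℓ + f₃ ℓ - Complex.I * (f₂' ℓ + f₃' ℓ) = 0 ∧
      f₁ ℓ - f₃ ℓ - Complex.I * (f₁' ℓ + f₃' ℓ) = 0) ↔
    (∃ g g' : ℝ → ℂ, IsSol ℓ E g g' ∧ (∃ x ∈ Icc (0 : ℝ) ℓ, g x ≠ 0) ∧
      g' 0 = 0 ∧
      (g' ℓ = 0 ∨ -g' ℓ = (Real.sqrt 3 : ℂ) * g ℓ ∨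
        -g' ℓ = -(Real.sqrt 3 : ℂ) * g ℓ)) := by
  constructor
  · rintro ⟨f₁, f₁', f₂, f₂', f₃, f₃', h₁, h₂, h₃, ⟨x, hx, hne⟩, h₁0, h₂0, h₃0,
      (hc : PreferredOrientationCoupling ..)⟩
    obtain ⟨μ, hμ, hμx⟩ := exists_pow_three_eq_one_dft_ne_zero hne
    refine ⟨_, _, (h₁.add (h₂.const_mul (μ ^ 2))).add (h₃.const_mul μ), ⟨x, hx, hμx⟩,
      by simp [h₁0, h₂0, h₃0], ?_⟩
    exact (exists_segmentCondition_iff _ _).1 ⟨μ, hμ, hc.segmentCondition_dft hμ⟩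
  · rintro ⟨g, g', hg, ⟨x, hx, hgx⟩, hg0, hrobin⟩
    obtain ⟨μ, hμ, hμℓ⟩ := (exists_segmentCondition_iff _ _).2 hrobin
    exact ⟨g, g', _, _, _, _, hg, hg.const_mul μ, hg.const_mul (μ ^ 2), ⟨x, hx, Or.inl hgx⟩,
      hg0, by simp [hg0], by simp [hg0], preferredOrientationCoupling_of_segmentCondition hμ hμℓ⟩

/-- The three-edge equilateral star graph with Neumann conditions at the loose ends and
the preferred-orientation coupling at the central vertex has a nonzero eigenfunction
with eigenvalue `E` iff one of its three quotient segments does: Neumann–Neumann,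
Neumann–Robin with parameter `√3`, or Neumann–Robin with parameter `−√3`. -/
theorem star_preferred_orientation_spectrum (ℓ E : ℝ) (hℓ : 0 < ℓ) :
    (∃ f₁ f₁' f₂ f₂' f₃ f₃' : ℝ → ℂ,
      IsSol ℓ E f₁ f₁' ∧ IsSol ℓ E f₂ f₂' ∧ IsSol ℓ E f₃ f₃' ∧
      (∃ x ∈ Icc (0 : ℝ) ℓ, f₁ x ≠ 0 ∨ f₂ x ≠ 0 ∨ f₃ x ≠ 0) ∧
      f₁' 0 = 0 ∧ f₂' 0 = 0 ∧ f₃' 0 = 0 ∧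
      -f₁ ℓ + f₂ ℓ - Complex.I * (f₁' ℓ + f₂' ℓ) = 0 ∧
      -f₂ ℓ + f₃ ℓ - Complex.I * (f₂' ℓ + f₃' ℓ) = 0 ∧
      f₁ ℓ - f₃ ℓ - Complex.I * (f₁' ℓ + f₃' ℓ) = 0) ↔
    (∃ g g' : ℝ → ℂ, IsSol ℓ E g g' ∧ (∃ x ∈ Icc (0 : ℝ) ℓ, g x ≠ 0) ∧
      g' 0 = 0 ∧
      (g' ℓ = 0 ∨ -g' ℓ = (Real.sqrt 3 : ℂ) * g ℓ ∨
        -g' ℓ = -(Real.sqrt 3 : ℂ) * g ℓ)) :=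
  star_preferred_orientation_spectrum_general ℓ E
end
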